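/- arXiv:0712.4005 — 5 statements merged into one kernel-verified Lean document; each statement's English description precedes it below -/
import Mathlib

section
/- For every subexponential function F : ℕ → ℝ (i.e. F positive and lim_{n→∞} (log F(n))/n = 0), there exists a function G : ℝ≥0 → ℝ with G ≥ F on ℕ, log G concave, and lim_{x→∞} (log G(x))/x = 0. -/
/-!
Take for `log G` the lower envelope of all lines `x ↦ a * x + b` with slope `a ≥ 0` lying above
`log F` on `ℕ`. As an infimum of affine functions it is concave and majorizes `log F`; since
`log F(n) = o(n)`, every slope `a > 0` occurs, so `log G(x) ≤ a * x + b_a` forces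
`log G(x) / x → 0`, while `log G ≥ log F(0)` on `[0, ∞)` bounds it from below.
-/

open Filter Set Topology

theorem concaveOn_ciInf {ι E : Type*} [Nonempty ι] [AddCommMonoid E] [SMul ℝ E] {s : Set E}
    {f : ι → E → ℝ} (hf : ∀ i, ConcaveOn ℝ s (f i))
    (hbdd : ∀ x ∈ s, BddBelow (range fun i => f i x)) (hs : Convex ℝ s) :
    ConcaveOn ℝ s fun x => ⨅ i, f i x := by
  refine ⟨hs, fun x hx y hy a b ha hb hab => le_ciInf fun i => ?_⟩
  show a • (⨅ i, f i x) + b • (⨅ i, f i y) ≤ f i (a • x + b • y)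
  calc a • (⨅ i, f i x) + b • (⨅ i, f i y) ≤ a • f i x + b • f i y := by
        gcongr
        exacts [ciInf_le (hbdd x hx) i, ciInf_le (hbdd y hy) i]
    _ ≤ f i (a • x + b • y) := (hf i).2 hx hy ha hb hab

theorem exists_forall_le_mul_add_of_tendsto_div {f : ℕ → ℝ}
    (hf : Tendsto (fun n : ℕ => f n / n) atTop (𝓝 0)) {a : ℝ} (ha : 0 < a) :
    ∃ b, ∀ n : ℕ, f n ≤ a * n + b := by
  have hle : ∀ᶠ n : ℕ in atTop, f n - a * n ≤ 0 := by
    filter_upwards [hf.eventually_lt_const ha, eventually_gt_atTop 0] with n hlt hn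
    rw [div_lt_iff₀ (by exact_mod_cast hn)] at hlt
    linarith
  obtain ⟨b, hb⟩ := (isBoundedUnder_of_eventually_le hle).bddAbove_range
  exact ⟨b, fun n => by linarith [hb (mem_range_self n)]⟩

def affineMajorants (f : ℕ → ℝ) : Set (ℝ × ℝ) :=
  {p | 0 ≤ p.1 ∧ ∀ n : ℕ, f n ≤ p.1 * n + p.2}

noncomputable def affineEnvelope (f : ℕ → ℝ) (x : ℝ) : ℝ :=
  ⨅ p : affineMajorants f, p.1.1 * x + p.1.2

section affineEnvelope

variable {f : ℕ → ℝ} {x : ℝ}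

theorem apply_zero_le_of_mem_affineMajorants {p : ℝ × ℝ} (hp : p ∈ affineMajorants f)
    (hx : 0 ≤ x) : f 0 ≤ p.1 * x + p.2 := by
  have := hp.2 0
  push_cast at this
  nlinarith [hp.1]

theorem bddBelow_affineMajorants_apply (hx : 0 ≤ x) :
    BddBelow (range fun p : affineMajorants f => p.1.1 * x + p.1.2) :=
  ⟨f 0, forall_mem_range.2 fun p => apply_zero_le_of_mem_affineMajorants p.2 hx⟩

theorem affineEnvelope_le {p : ℝ × ℝ} (hp : p ∈ affineMajorants f) (hx : 0 ≤ x) :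
    affineEnvelope f x ≤ p.1 * x + p.2 :=
  ciInf_le (bddBelow_affineMajorants_apply hx) ⟨p, hp⟩

theorem le_affineEnvelope_natCast (hne : (affineMajorants f).Nonempty) (n : ℕ) :
    f n ≤ affineEnvelope f n :=
  haveI := hne.to_subtype
  le_ciInf fun p => p.2.2 n

theorem apply_zero_le_affineEnvelope (hne : (affineMajorants f).Nonempty) (hx : 0 ≤ x) :
    f 0 ≤ affineEnvelope f x :=
  haveI := hne.to_subtype
  le_ciInf fun p => apply_zero_le_of_mem_affineMajorants p.2 hx

theorem concaveOn_affineEnvelope (hne : (affineMajorants f).Nonempty) :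
    ConcaveOn ℝ (Ici 0) (affineEnvelope f) :=
  haveI := hne.to_subtype
  concaveOn_ciInf (fun p => ((concaveOn_id (convex_Ici 0)).smul p.2.1).add_const p.1.2)
    (fun _ hx => bddBelow_affineMajorants_apply hx) (convex_Ici 0)

theorem tendsto_affineEnvelope_div_atTop
    (hslope : ∀ a > 0, ∃ b, (a, b) ∈ affineMajorants f) :
    Tendsto (fun x => affineEnvelope f x / x) atTop (𝓝 0) := by
  obtain ⟨b₁, hb₁⟩ := hslope 1 one_pos
  refine tendsto_order.2 ⟨fun c hc => ?_, fun c hc => ?_⟩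
  · filter_upwards [((tendsto_const_nhds (x := f 0)).div_atTop tendsto_id).eventually_const_lt hc,
      eventually_gt_atTop 0] with x hlt hx
    exact hlt.trans_le ((div_le_div_iff_of_pos_right hx).2
      (apply_zero_le_affineEnvelope ⟨_, hb₁⟩ hx.le))
  · obtain ⟨b, hb⟩ := hslope (c / 2) (half_pos hc)
    have hlim : Tendsto (fun x : ℝ => c / 2 + b / x) atTop (𝓝 (c / 2)) := by
      simpa using (tendsto_const_nhds (x := c / 2)).add
        ((tendsto_const_nhds (x := b)).div_atTop tendsto_id)
    filter_upwards [hlim.eventually_lt_const (half_lt_self hc), eventually_gt_atTop 0]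
      with x hlt hx
    calc affineEnvelope f x / x ≤ (c / 2 * x + b) / x := by
          gcongr; exact affineEnvelope_le hb hx.le
      _ = c / 2 + b / x := by field_simp
      _ < c := hlt

end affineEnvelope

/-- For every subexponential function `F : ℕ → ℝ` (positive with `log F(n) / n → 0`),
there is a majorant `G` on the nonnegative reals with `log G` concave and
`log G(x) / x → 0`. -/
theorem exists_log_concave_subexponential_majorant
    (F : ℕ → ℝ) (hFpos : ∀ n, 0 < F n)
    (hF : Tendsto (fun n : ℕ => Real.log (F n) / n) atTop (nhds 0)) :
    ∃ G : ℝ → ℝ,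
      (∀ n : ℕ, F n ≤ G n) ∧
      ConcaveOn ℝ (Set.Ici (0 : ℝ)) (fun x => Real.log (G x)) ∧
      Tendsto (fun x : ℝ => Real.log (G x) / x) atTop (nhds 0) := by
  have hslope : ∀ a > 0, ∃ b, (a, b) ∈ affineMajorants fun n => Real.log (F n) := fun a ha =>
    (exists_forall_le_mul_add_of_tendsto_div hF ha).imp fun _ hb => ⟨ha.le, hb⟩
  have hne : (affineMajorants fun n => Real.log (F n)).Nonempty :=
    ⟨_, (hslope 1 one_pos).choose_spec⟩
  refine ⟨fun x => Real.exp (affineEnvelope (fun n => Real.log (F n)) x), fun n => ?_, ?_, ?_⟩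
  · simpa [Real.exp_log (hFpos n)] using Real.exp_le_exp.2 (le_affineEnvelope_natCast hne n)
  · simpa only [Real.log_exp] using concaveOn_affineEnvelope hne
  · simpa only [Real.log_exp] using tendsto_affineEnvelope_div_atTop hslope
end

section
/- Let λ(n) = n log log n / log n and, for fixed constants d ≥ 2 and m ≥ 1 with A = d^m, define f(n) = (log n)/(n (log log n)²) + A(log n)²/(n(log log n)²) + ((n−λ(n))/n) · (log n / log((n−λ(n))/A)) · (log log((n−λ(n))/A) / log log n)². Then there exists N such that f(n) ≤ 1 for all n ≥ N. -/
/-!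
Write `L = log n` and `ℓ = log L`. Then `n - λ(n) = n (L - ℓ) / L`, so once `log A ≤ ℓ / 4` the
quantity `M = log ((n - λ(n)) / A)` lies in `[L - ℓ/2, L]`. Hence `log M ≤ ℓ` and the third
term of `f` is at most `(L - ℓ) / (L - ℓ/2) ≤ 1 - ℓ / (2L)`. The saving `ℓ / (2L)` absorbs the
first two terms, which are `O(A L² / (n ℓ²))` and so at most `ℓ / (2L)` once `n ≥ 8 A L³`.
-/

/-- `λ(x) = x log log x / log x`. -/
noncomputable def lamFG (x : ℝ) : ℝ := x * Real.log (Real.log x) / Real.log x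

open Filter Real Set

noncomputable def fgFun (A y : ℝ) : ℝ :=
  log y / (y * log (log y) ^ 2) + A * log y ^ 2 / (y * log (log y) ^ 2)
    + ((y - lamFG y) / y) * (log y / log ((y - lamFG y) / A))
      * (log (log ((y - lamFG y) / A)) / log (log y)) ^ 2

lemma sub_lamFG_eq {y : ℝ} (hy : log y ≠ 0) :
    y - lamFG y = y * ((log y - log (log y)) / log y) := by
  unfold lamFG
  field_simp

lemma log_sub_lamFG_div_mem_Icc {A y : ℝ} (hy : 0 < y) (hA : 1 ≤ A)
    (hl : 1 ≤ log (log y)) (hAl : 4 * log A ≤ log (log y)) (hlL : log (log y) ≤ log y / 8) :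
    log ((y - lamFG y) / A) ∈ Icc (log y - log (log y) / 2) (log y) := by
  set L := log y
  set l := log L
  have hL : 0 < L := by linarith
  have hLl : 0 < L - l := by linarith
  have hlog : log ((y - lamFG y) / A) = L + log ((L - l) / L) - log A := by
    rw [sub_lamFG_eq hL.ne', log_div (by positivity) (by positivity),
      log_mul hy.ne' (by positivity)]
  have hlogA : 0 ≤ log A := log_nonneg hA
  have hratio_le : log ((L - l) / L) ≤ 0 :=
    log_nonpos (by positivity) ((div_le_one hL).2 (by linarith))
  have hratio_ge : -(l / 4) ≤ log ((L - l) / L) := by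
    have h := one_sub_inv_le_log_of_pos (div_pos hLl hL)
    have h1 : 1 - ((L - l) / L)⁻¹ = -(l / (L - l)) := by field_simp; ring
    have h2 : l / (L - l) ≤ l / 4 :=
      div_le_div_of_nonneg_left (by linarith) (by norm_num) (by linarith)
    linarith
  rw [hlog]
  constructor <;> linarith

lemma sub_log_div_mul_div_mul_sq_le {L M : ℝ} (hM : 1 ≤ M) (hML : M ≤ L)
    (hLM : L - log L / 2 ≤ M) (hl : 0 < log L) (hlL : log L ≤ L) :
    (L - log L) / L * (L / M) * (log M / log L) ^ 2 ≤ 1 - log L / (2 * L) := by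
  set l := log L
  have hL : 0 < L := by linarith
  have hsq : (log M / l) ^ 2 ≤ 1 := by
    have h0 : 0 ≤ log M / l := div_nonneg (log_nonneg hM) hl.le
    have h1 : log M / l ≤ 1 := (div_le_one hl).2 (log_le_log (by linarith) hML)
    nlinarith
  calc (L - l) / L * (L / M) * (log M / l) ^ 2
      ≤ (L - l) / L * (L / M) := mul_le_of_le_one_right (by positivity) hsq
    _ = (L - l) / M := by field_simp
    _ ≤ (L - l) / (L - l / 2) := div_le_div_of_nonneg_left (by linarith) (by linarith) hLM
    _ ≤ 1 - l / (2 * L) := by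
      rw [div_le_iff₀ (by linarith)]
      have : (1 - l / (2 * L)) * (L - l / 2) = L - l + l ^ 2 / (4 * L) := by field_simp; ring
      rw [this]
      have : 0 ≤ l ^ 2 / (4 * L) := by positivity
      linarith

lemma div_add_mul_sq_div_le {A L l y : ℝ} (hA : 1 ≤ A) (hL : 1 ≤ L) (hl : 1 ≤ l)
    (hy : 8 * A * L ^ 3 ≤ y) :
    L / (y * l ^ 2) + A * L ^ 2 / (y * l ^ 2) ≤ l / (2 * L) := by
  have hy0 : 0 < y := lt_of_lt_of_le (by positivity) hy
  rw [← add_div, div_le_div_iff₀ (by positivity) (by positivity)]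
  have hpoly : (L + A * L ^ 2) * (2 * L) ≤ 8 * A * L ^ 3 := by
    nlinarith [mul_le_mul_of_nonneg_left hA (by positivity : (0 : ℝ) ≤ L ^ 3),
      mul_le_mul_of_nonneg_left hL (by positivity : (0 : ℝ) ≤ L ^ 2)]
  calc (L + A * L ^ 2) * (2 * L) ≤ y := hpoly.trans hy
    _ ≤ y * l ^ 3 := le_mul_of_one_le_right hy0.le (one_le_pow₀ hl)
    _ = l * (y * l ^ 2) := by ring

lemma fgFun_le_one {A y : ℝ} (hA : 1 ≤ A)
    (hl : 1 ≤ log (log y)) (hAl : 4 * log A ≤ log (log y)) (hlL : log (log y) ≤ log y / 8)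
    (hy : 8 * A * log y ^ 3 ≤ y) : fgFun A y ≤ 1 := by
  set L := log y
  set l := log L
  have hL : 8 ≤ L := by linarith
  have hy0 : 0 < y := lt_of_lt_of_le (by positivity) hy
  have hratio : (y - lamFG y) / y = (L - l) / L := by
    rw [sub_lamFG_eq (by positivity : L ≠ 0)]; exact mul_div_cancel_left₀ _ hy0.ne'
  obtain ⟨hM_ge, hM_le⟩ := log_sub_lamFG_div_mem_Icc hy0 hA hl hAl hlL
  have hfirst := div_add_mul_sq_div_le hA (by linarith) hl hy
  have hthird := sub_log_div_mul_div_mul_sq_le (M := log ((y - lamFG y) / A))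
    (by linarith) hM_le hM_ge (by linarith) (by linarith)
  unfold fgFun
  rw [hratio]
  linarith

lemma eventually_fgFun_le_one {A : ℝ} (hA : 1 ≤ A) : ∀ᶠ y in atTop, fgFun A y ≤ 1 := by
  have hll : Tendsto (fun y => log (log y)) atTop atTop :=
    tendsto_log_atTop.comp tendsto_log_atTop
  have hlL : ∀ᶠ y in atTop, log (log y) ≤ log y / 8 := by
    filter_upwards
      [tendsto_log_atTop.eventually (isLittleO_log_id_atTop.def (by norm_num : (0 : ℝ) < 1 / 8)),
        tendsto_log_atTop.eventually_ge_atTop 0] with y h hL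
    rw [norm_eq_abs, norm_eq_abs, id, abs_of_nonneg hL] at h
    linarith [le_abs_self (log (log y))]
  have hy : ∀ᶠ y in atTop, 8 * A * log y ^ 3 ≤ y := by
    filter_upwards [isLittleO_pow_log_id_atTop.def (by positivity : 0 < 1 / (8 * A)),
      eventually_ge_atTop 0] with y h hy
    rw [norm_eq_abs, norm_eq_abs, id, abs_of_nonneg hy] at h
    calc 8 * A * log y ^ 3 ≤ 8 * A * (1 / (8 * A) * y) := by
          gcongr; exact (le_abs_self _).trans h
      _ = y := by field_simp
  filter_upwards [hll.eventually_ge_atTop 1, hll.eventually_ge_atTop (4 * log A), hlL, hy]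
    with y using fgFun_le_one hA

theorem fg_lemma_lf_general (d m : ℕ) (hd : 2 ≤ d) :
    ∃ N : ℕ, ∀ n : ℕ, N ≤ n →
      Real.log n / ((n : ℝ) * (Real.log (Real.log n)) ^ 2)
        + (d : ℝ) ^ m * (Real.log n) ^ 2 / ((n : ℝ) * (Real.log (Real.log n)) ^ 2)
        + (((n : ℝ) - lamFG n) / n)
            * (Real.log n / Real.log (((n : ℝ) - lamFG n) / (d : ℝ) ^ m))
            * (Real.log (Real.log (((n : ℝ) - lamFG n) / (d : ℝ) ^ m))
                / Real.log (Real.log n)) ^ 2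
      ≤ 1 := by
  have hA : (1 : ℝ) ≤ (d : ℝ) ^ m := one_le_pow₀ (by exact_mod_cast (by omega : 1 ≤ d))
  exact eventually_atTop.mp
    (tendsto_natCast_atTop_atTop.eventually (eventually_fgFun_le_one hA))

/-- With `A = d^m` (`d ≥ 2`, `m ≥ 1`) and
`f(n) = log n/(n (log log n)²) + A (log n)²/(n (log log n)²)
  + ((n−λ(n))/n) · (log n / log((n−λ(n))/A)) · (log log((n−λ(n))/A)/log log n)²`,
there exists `N` such that `f(n) ≤ 1` for all `n ≥ N`. -/
theorem fg_lemma_lf (d m : ℕ) (hd : 2 ≤ d) (hm : 1 ≤ m) :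
    ∃ N : ℕ, ∀ n : ℕ, N ≤ n →
      Real.log n / ((n : ℝ) * (Real.log (Real.log n)) ^ 2)
        + (d : ℝ) ^ m * (Real.log n) ^ 2 / ((n : ℝ) * (Real.log (Real.log n)) ^ 2)
        + (((n : ℝ) - lamFG n) / n)
            * (Real.log n / Real.log (((n : ℝ) - lamFG n) / (d : ℝ) ^ m))
            * (Real.log (Real.log (((n : ℝ) - lamFG n) / (d : ℝ) ^ m))
                / Real.log (Real.log n)) ^ 2
      ≤ 1 :=
  fg_lemma_lf_general d m hd
end

section
/- In the Fabrykowski–Gupta group G = ⟨a, t⟩ acting on the ternary rooted tree, the element a·t has infinite order; consequently G is not a torsion group. -/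
/-- Action of the rooted automorphism `a` of the ternary tree `{0,1,2}^*`:
cyclic permutation `(0 1 2)` at the root. -/
def fgA : List (Fin 3) → List (Fin 3)
  | [] => []
  | x :: w => (x + 1) :: w

/-- Inverse of `fgA`. -/
def fgA' : List (Fin 3) → List (Fin 3)
  | [] => []
  | x :: w => (x + 2) :: w

/-- Action of the automorphism `t = ⟨a, 1, t⟩`. -/
def fgT : List (Fin 3) → List (Fin 3)
  | [] => []
  | x :: w => if x = 0 then x :: fgA w else if x = 1 then x :: w else x :: fgT w

/-- Inverse of `fgT`. -/
def fgT' : List (Fin 3) → List (Fin 3)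
  | [] => []
  | x :: w => if x = 0 then x :: fgA' w else if x = 1 then x :: w else x :: fgT' w

theorem fgA_left : Function.LeftInverse fgA' fgA := by
  intro w
  cases w with
  | nil => rfl
  | cons x w =>
    have h : ∀ y : Fin 3, y + 1 + 2 = y := by decide
    simp [fgA, fgA', h]

theorem fgA_right : Function.RightInverse fgA' fgA := by
  intro w
  cases w with
  | nil => rfl
  | cons x w =>
    have h : ∀ y : Fin 3, y + 2 + 1 = y := by decide
    simp [fgA, fgA', h]

theorem fgT_left : Function.LeftInverse fgT' fgT := by
  intro w
  induction w with
  | nil => rfl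
  | cons x w ih =>
    fin_cases x <;> simp [fgT, fgT', fgA_left _, ih]

theorem fgT_right : Function.RightInverse fgT' fgT := by
  intro w
  induction w with
  | nil => rfl
  | cons x w ih =>
    fin_cases x <;> simp [fgT, fgT', fgA_right _, ih]

/-- The rooted automorphism `a` as a permutation of `{0,1,2}^*`. -/
def fgAperm : Equiv.Perm (List (Fin 3)) := ⟨fgA, fgA', fgA_left, fgA_right⟩

/-- The automorphism `t = ⟨a, 1, t⟩` as a permutation of `{0,1,2}^*`. -/
def fgTperm : Equiv.Perm (List (Fin 3)) := ⟨fgT, fgT', fgT_left, fgT_right⟩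

/-! The root permutation of `(a·t)^n` is `x ↦ x + n`, so `(a·t)^n = 1` forces `3 ∣ n`. On the
other hand `(a·t)^3` fixes the vertex `1` and acts on the subtree below it as `a·t` itself, so
`(a·t)^(3m) = 1` forces `(a·t)^m = 1`. A finite order would therefore have a proper divisor that
is again a period. -/

theorem not_isOfFinOrder_of_pow_eq_one_descent {M : Type*} [Monoid M] {x : M} {k : ℕ}
    (hk : 1 < k) (hdvd : ∀ n, x ^ n = 1 → k ∣ n) (hdesc : ∀ m, x ^ (k * m) = 1 → x ^ m = 1) :
    ¬ IsOfFinOrder x := by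
  intro hx
  obtain ⟨m, hm⟩ := hdvd _ (pow_orderOf_eq_one x)
  have hpos : 0 < orderOf x := hx.orderOf_pos
  have hm_pos : 0 < m := Nat.pos_of_mul_pos_left (hm ▸ hpos)
  have hle : orderOf x ≤ m := orderOf_le_of_pow_eq_one hm_pos (hdesc m (hm ▸ pow_orderOf_eq_one x))
  nlinarith

theorem fgA_fgT_apply_cons (x : Fin 3) (w : List (Fin 3)) :
    ∃ w', (fgAperm * fgTperm) (x :: w) = (x + 1) :: w' := by
  fin_cases x <;> exact ⟨_, rfl⟩

open Fin.NatCast in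
theorem fgA_fgT_pow_apply_cons (n : ℕ) (x : Fin 3) (w : List (Fin 3)) :
    ∃ w', ((fgAperm * fgTperm) ^ n) (x :: w) = (x + n) :: w' := by
  induction n generalizing x w with
  | zero => exact ⟨w, by simp⟩
  | succ n ih =>
    obtain ⟨w₁, hw₁⟩ := fgA_fgT_apply_cons x w
    obtain ⟨w₂, hw₂⟩ := ih (x + 1) w₁
    refine ⟨w₂, ?_⟩
    rw [pow_succ, Equiv.Perm.mul_apply, hw₁, hw₂, Nat.cast_succ, add_comm (n : Fin 3), add_assoc]

theorem three_dvd_of_fgA_fgT_pow_eq_one {n : ℕ} (h : (fgAperm * fgTperm) ^ n = 1) : 3 ∣ n := by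
  obtain ⟨w, hw⟩ := fgA_fgT_pow_apply_cons n 0 []
  rw [h, Equiv.Perm.one_apply, List.cons.injEq] at hw
  simpa using hw.1.symm

-- Under `a·t`: `1w ↦ 2w ↦ 0·t(w) ↦ 1·a(t(w))`.
theorem fgA_fgT_pow_three_apply_one_cons (w : List (Fin 3)) :
    ((fgAperm * fgTperm) ^ 3) (1 :: w) = 1 :: (fgAperm * fgTperm) w :=
  rfl

theorem fgA_fgT_pow_three_mul_apply_one_cons (m : ℕ) (w : List (Fin 3)) :
    ((fgAperm * fgTperm) ^ (3 * m)) (1 :: w) = 1 :: ((fgAperm * fgTperm) ^ m) w := by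
  induction m generalizing w with
  | zero => rfl
  | succ m ih =>
    rw [mul_add_one, pow_add, Equiv.Perm.mul_apply, fgA_fgT_pow_three_apply_one_cons, ih,
      ← Equiv.Perm.mul_apply, ← pow_succ]

theorem fgA_fgT_pow_eq_one_of_pow_three_mul {m : ℕ} (h : (fgAperm * fgTperm) ^ (3 * m) = 1) :
    (fgAperm * fgTperm) ^ m = 1 := by
  ext1 w
  simpa [h] using (fgA_fgT_pow_three_mul_apply_one_cons m w).symm

/-- In the Fabrykowski–Gupta group `G = ⟨a, t⟩`, the element `a·t` has infinite
order; consequently `G` is not a torsion group. -/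
theorem fg_not_torsion :
    ¬ IsOfFinOrder (fgAperm * fgTperm) ∧
    ¬ (∀ g ∈ Subgroup.closure ({fgAperm, fgTperm} : Set (Equiv.Perm (List (Fin 3)))),
        IsOfFinOrder g) := by
  have h_inf : ¬ IsOfFinOrder (fgAperm * fgTperm) :=
    not_isOfFinOrder_of_pow_eq_one_descent (by norm_num)
      (fun _ => three_dvd_of_fgA_fgT_pow_eq_one) (fun _ => fgA_fgT_pow_eq_one_of_pow_three_mul)
  refine ⟨h_inf, fun h_torsion => h_inf (h_torsion _ ?_)⟩
  exact mul_mem (Subgroup.subset_closure (by simp)) (Subgroup.subset_closure (by simp))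
end

section
/- Let ℓ be the word metric on the Fabrykowski–Gupta group G with weights ℓ(t^{±1}) = 1 and ℓ(a^{±1}) = 0. Then for every g ∈ G with first-level decomposition g = ⟨g₀, g₁, g₂⟩σ, one has ℓ(g₀) + ℓ(g₁) + ℓ(g₂) ≤ ℓ(g). -/
/-- The word length on the Fabrykowski–Gupta group with weights
`ℓ(t^{±1}) = 1`, `ℓ(a^{±1}) = 0`: the minimum number of occurrences of `t^{±1}`
over all words in `{a^{±1}, t^{±1}}` representing `g`. -/
noncomputable def fgLen (g : Equiv.Perm (List (Fin 3))) : ℕ :=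
  sInf {n : ℕ | ∃ L : List (Bool × Bool),
    (L.map fun p => if p.1 then (if p.2 then fgTperm else fgTperm⁻¹)
                    else (if p.2 then fgAperm else fgAperm⁻¹)).prod = g ∧
    L.countP (fun p => p.1) = n}

/-!
Write `g` as a word of minimal `t`-count. Reading the word letter by letter through the wreath
recursion gives words for the sections `g₀, g₁, g₂`: a letter `a^{±1}` only permutes the first
level and leaves nothing below it, while `t^{±1} = ⟨a^{±1}, 1, t^{±1}⟩` leaves a single `t^{±1}`
in one section (and an `a^{±1}` in another). Hence the `t`-counts of the three section words add
up to that of the word for `g`, and each of them bounds the length of its section.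
-/

namespace FabrykowskiGupta

local notation "Aut" => Equiv.Perm (List (Fin 3))

/-- As in `fgLen`, the letter `(isT, positive)` stands for `t`, `t⁻¹`, `a` or `a⁻¹`. -/
def letter (p : Bool × Bool) : Aut :=
  if p.1 then (if p.2 then fgTperm else fgTperm⁻¹)
  else (if p.2 then fgAperm else fgAperm⁻¹)

def eval (L : List (Bool × Bool)) : Aut := (L.map letter).prod

theorem eval_cons (p : Bool × Bool) (L : List (Bool × Bool)) : eval (p :: L) = letter p * eval L :=
  List.prod_cons

theorem eval_append (L₁ L₂ : List (Bool × Bool)) : eval (L₁ ++ L₂) = eval L₁ * eval L₂ := by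
  simp only [eval, List.map_append, List.prod_append]

def tCount (L : List (Bool × Bool)) : ℕ := L.countP (fun p => p.1)

theorem tCount_append (L₁ L₂ : List (Bool × Bool)) :
    tCount (L₁ ++ L₂) = tCount L₁ + tCount L₂ :=
  List.countP_append ..

theorem fgLen_eq_sInf (g : Aut) :
    fgLen g = sInf {n : ℕ | ∃ L, eval L = g ∧ tCount L = n} := rfl

theorem fgLen_eval_le (L : List (Bool × Bool)) : fgLen (eval L) ≤ tCount L := by
  rw [fgLen_eq_sInf]
  exact Nat.sInf_le ⟨L, rfl, rfl⟩

theorem exists_tCount_eq_fgLen {g : Aut} (h : ∃ L, eval L = g) :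
    ∃ L, eval L = g ∧ tCount L = fgLen g := by
  obtain ⟨L, hL⟩ := h
  rw [fgLen_eq_sInf]
  exact Nat.sInf_mem (⟨_, L, hL, rfl⟩ : {n : ℕ | ∃ L, eval L = g ∧ tCount L = n}.Nonempty)

def invLetter (p : Bool × Bool) : Bool × Bool := (p.1, !p.2)

theorem letter_invLetter (p : Bool × Bool) : letter (invLetter p) = (letter p)⁻¹ := by
  obtain ⟨_ | _, _ | _⟩ := p <;> simp [letter, invLetter]

theorem eval_reverse_map_invLetter (L : List (Bool × Bool)) :
    eval (L.map invLetter).reverse = (eval L)⁻¹ := by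
  simp only [eval, List.prod_inv_reverse, List.map_reverse, List.map_map]
  congr 2
  exact List.map_congr_left fun p _ => letter_invLetter p

theorem exists_eval_eq {g : Aut}
    (hg : g ∈ Subgroup.closure ({fgAperm, fgTperm} : Set Aut)) : ∃ L, eval L = g := by
  induction hg using Subgroup.closure_induction with
  | mem x hx =>
    rcases hx with rfl | rfl
    · exact ⟨[(false, true)], by simp [eval, letter]⟩
    · exact ⟨[(true, true)], by simp [eval, letter]⟩
  | one => exact ⟨[], rfl⟩
  | mul x y _ _ hx hy =>
    obtain ⟨L₁, rfl⟩ := hx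
    obtain ⟨L₂, rfl⟩ := hy
    exact ⟨L₁ ++ L₂, eval_append L₁ L₂⟩
  | inv x _ hx =>
    obtain ⟨L, rfl⟩ := hx
    exact ⟨(L.map invLetter).reverse, eval_reverse_map_invLetter L⟩

def rootCycle : Equiv.Perm (Fin 3) := ⟨(· + 1), (· + 2), by decide, by decide⟩

def letterRoot (p : Bool × Bool) : Equiv.Perm (Fin 3) :=
  if p.1 then 1 else (if p.2 then rootCycle else rootCycle⁻¹)

/-- Read off from `t^{±1} = ⟨a^{±1}, 1, t^{±1}⟩`; the sections of `a^{±1}` are trivial. -/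
def letterSection (p : Bool × Bool) (x : Fin 3) : List (Bool × Bool) :=
  if p.1 then (if x = 0 then [(false, p.2)] else if x = 2 then [(true, p.2)] else []) else []

theorem letter_apply_cons (p : Bool × Bool) (x : Fin 3) (w : List (Fin 3)) :
    letter p (x :: w) = letterRoot p x :: eval (letterSection p x) w := by
  obtain ⟨_ | _, _ | _⟩ := p <;> fin_cases x <;>
    simp [letter, letterRoot, letterSection, eval, fgAperm, fgTperm, Equiv.Perm.inv_def,
      fgA, fgA', fgT, fgT', rootCycle]

theorem sum_tCount_letterSection (p : Bool × Bool) :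
    ∑ x, tCount (letterSection p x) = tCount [p] := by
  obtain ⟨_ | _, _ | _⟩ := p <;> decide

def wordRoot : List (Bool × Bool) → Equiv.Perm (Fin 3)
  | [] => 1
  | p :: L => letterRoot p * wordRoot L

def wordSection : List (Bool × Bool) → Fin 3 → List (Bool × Bool)
  | [], _ => []
  | p :: L, x => letterSection p (wordRoot L x) ++ wordSection L x

theorem eval_apply_cons (L : List (Bool × Bool)) (x : Fin 3) (w : List (Fin 3)) :
    eval L (x :: w) = wordRoot L x :: eval (wordSection L x) w := by
  induction L with
  | nil => rfl
  | cons p L ih =>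
    rw [eval_cons, Equiv.Perm.mul_apply, ih, letter_apply_cons]
    simp only [wordRoot, wordSection, eval_append, Equiv.Perm.mul_apply]

theorem sum_tCount_wordSection (L : List (Bool × Bool)) :
    ∑ x, tCount (wordSection L x) = tCount L := by
  induction L with
  | nil => rfl
  | cons p L ih =>
    calc ∑ x, tCount (wordSection (p :: L) x)
        = ∑ x, tCount (letterSection p (wordRoot L x)) + ∑ x, tCount (wordSection L x) := by
          simp only [wordSection, tCount_append, Finset.sum_add_distrib]
      _ = tCount [p] + tCount L := by
          rw [Equiv.sum_comp (wordRoot L) (fun y => tCount (letterSection p y)),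
            sum_tCount_letterSection, ih]
      _ = tCount (p :: L) := by rw [← tCount_append, List.singleton_append]

end FabrykowskiGupta

open FabrykowskiGupta

/-- For every `g` in the Fabrykowski–Gupta group with first-level decomposition
`g = ⟨g₀, g₁, g₂⟩σ`, one has `ℓ(g₀) + ℓ(g₁) + ℓ(g₂) ≤ ℓ(g)`. -/
theorem fg_states_length_le
    (g : Equiv.Perm (List (Fin 3)))
    (hg : g ∈ Subgroup.closure ({fgAperm, fgTperm} : Set (Equiv.Perm (List (Fin 3)))))
    (σ : Equiv.Perm (Fin 3)) (gs : Fin 3 → Equiv.Perm (List (Fin 3)))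
    (hdec : ∀ (x : Fin 3) (w : List (Fin 3)), g (x :: w) = σ x :: gs x w) :
    fgLen (gs 0) + fgLen (gs 1) + fgLen (gs 2) ≤ fgLen g := by
  obtain ⟨L, rfl, hL⟩ := exists_tCount_eq_fgLen (exists_eval_eq hg)
  have hsections : ∀ x, gs x = eval (wordSection L x) := fun x =>
    Equiv.ext fun w => (List.cons.inj ((hdec x w).symm.trans (eval_apply_cons L x w))).2
  calc fgLen (gs 0) + fgLen (gs 1) + fgLen (gs 2) = ∑ x, fgLen (gs x) :=
        (Fin.sum_univ_three fun x => fgLen (gs x)).symm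
    _ ≤ ∑ x, tCount (wordSection L x) :=
        Finset.sum_le_sum fun x _ => hsections x ▸ fgLen_eval_le _
    _ = fgLen (eval L) := by rw [sum_tCount_wordSection, hL]
end

section
/- If G is a group admitting a short exact sequence 1 → N → G → P → 1 with N locally nilpotent and P periodic, then G contains no free subsemigroup of rank 2: for any x, y ∈ G, the subsemigroup generated by x and y is not free of rank 2. -/
/-!
Malcev's words: put `X₀ = a`, `Y₀ = b`, `Xₖ₊₁ = XₖYₖ`, `Yₖ₊₁ = YₖXₖ`. If `Xₖ⁻¹Yₖ = z` lies in
the `(m+1)`-st term of the upper central series, then `Xₖ₊₁⁻¹Yₖ₊₁ = ⁅z⁻¹, Xₖ⁻¹⁆` lies in the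
`m`-th, so in a group of nilpotency class `c` the words `X_c` and `Y_c` coincide.

Given `x, y`, periodicity of `P` gives `n > 0` with `xⁿ, yⁿ` in the kernel, so `⟨xⁿ, yⁿ⟩` is
nilpotent and `X_c(xⁿ, yⁿ) = Y_c(xⁿ, yⁿ)`. These are the values of two positive words in
`x, y`, which are distinct because they begin with different letters.
-/

def malcevWords {M : Type*} [Mul M] (a b : M) : ℕ → M × M
  | 0 => (a, b)
  | k + 1 => ((malcevWords a b k).1 * (malcevWords a b k).2,
      (malcevWords a b k).2 * (malcevWords a b k).1)

section MalcevWords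

variable {M N : Type*}

theorem map_malcevWords [Mul M] [Mul N] {F : Type*} [FunLike F M N] [MulHomClass F M N]
    (f : F) (a b : M) (k : ℕ) :
    malcevWords (f a) (f b) k = Prod.map f f (malcevWords a b k) := by
  induction k with
  | zero => rfl
  | succ k ih => simp [malcevWords, ih]

theorem dvd_malcevWords_fst [Monoid M] (a b : M) (k : ℕ) : a ∣ (malcevWords a b k).1 := by
  induction k with
  | zero => exact dvd_rfl
  | succ k ih => exact ih.mul_right _

theorem dvd_malcevWords_snd [Monoid M] (a b : M) (k : ℕ) : b ∣ (malcevWords a b k).2 := by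
  induction k with
  | zero => exact dvd_rfl
  | succ k ih => exact ih.mul_right _

end MalcevWords

section UpperCentralSeries

variable {G : Type*} [Group G]

theorem mul_inv_mul_swap_mem_upperCentralSeries {a b : G} {m : ℕ}
    (h : a⁻¹ * b ∈ Subgroup.upperCentralSeries G (m + 1)) :
    (a * b)⁻¹ * (b * a) ∈ Subgroup.upperCentralSeries G m := by
  have hcomm := Subgroup.mem_upperCentralSeries_succ_iff.1 (inv_mem h) a⁻¹
  rw [commutatorElement_def] at hcomm
  convert hcomm using 1
  group

theorem malcevWords_inv_mul_mem_upperCentralSeries {a b : G} {m : ℕ} (k : ℕ)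
    (h : a⁻¹ * b ∈ Subgroup.upperCentralSeries G (m + k)) :
    (malcevWords a b k).1⁻¹ * (malcevWords a b k).2 ∈ Subgroup.upperCentralSeries G m := by
  induction k generalizing m with
  | zero => exact h
  | succ k ih => exact mul_inv_mul_swap_mem_upperCentralSeries (ih (by rwa [add_right_comm]))

theorem Group.IsNilpotent.exists_malcevWords_fst_eq_snd [Group.IsNilpotent G] :
    ∃ c, ∀ a b : G, (malcevWords a b c).1 = (malcevWords a b c).2 := by
  obtain ⟨c, hc⟩ := Group.IsNilpotent.nilpotent (G := G)
  refine ⟨c, fun a b => inv_mul_eq_one.1 ?_⟩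
  rw [← Subgroup.mem_bot, ← Subgroup.upperCentralSeries_zero]
  exact malcevWords_inv_mul_mem_upperCentralSeries c (by rw [zero_add, hc]; exact Subgroup.mem_top _)

theorem Subgroup.exists_malcevWords_fst_eq_snd {H : Subgroup G} [Group.IsNilpotent H]
    {a b : G} (ha : a ∈ H) (hb : b ∈ H) :
    ∃ c, (malcevWords a b c).1 = (malcevWords a b c).2 := by
  obtain ⟨c, hc⟩ := Group.IsNilpotent.exists_malcevWords_fst_eq_snd (G := H)
  refine ⟨c, ?_⟩
  have hmap := map_malcevWords H.subtype ⟨a, ha⟩ ⟨b, hb⟩ c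
  simp only [Subgroup.subtype_apply] at hmap
  rw [hmap, Prod.map_fst, Prod.map_snd, hc]

end UpperCentralSeries

theorem MonoidHom.exists_pow_mem_ker {G P : Type*} [Group G] [Group P] (π : G →* P) {x y : G}
    (hx : IsOfFinOrder (π x)) (hy : IsOfFinOrder (π y)) :
    ∃ n ≠ 0, x ^ n ∈ π.ker ∧ y ^ n ∈ π.ker := by
  refine ⟨orderOf (π x) * orderOf (π y), mul_ne_zero hx.orderOf_pos.ne' hy.orderOf_pos.ne', ?_, ?_⟩
  · rw [π.mem_ker, map_pow, pow_mul, pow_orderOf_eq_one, one_pow]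
  · rw [π.mem_ker, map_pow, mul_comm, pow_mul, pow_orderOf_eq_one, one_pow]

theorem FreeMonoid.eq_of_of_dvd_of_of_dvd {α : Type*} {a b : α} {w : FreeMonoid α}
    (ha : FreeMonoid.of a ∣ w) (hb : FreeMonoid.of b ∣ w) : a = b := by
  obtain ⟨u, rfl⟩ := ha
  obtain ⟨v, hv⟩ := hb
  exact (List.cons.inj (congrArg FreeMonoid.toList hv)).1

theorem not_injOn_nonempty_words_of_malcevWords_pow_eq {M : Type*} [Monoid M] (x y : M) {n c : ℕ}
    (hn : n ≠ 0) (h : (malcevWords (x ^ n) (y ^ n) c).1 = (malcevWords (x ^ n) (y ^ n) c).2) :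
    ¬ (∀ w₁ w₂ : List Bool, w₁ ≠ [] → w₂ ≠ [] →
          (w₁.map fun b => if b then x else y).prod
            = (w₂.map fun b => if b then x else y).prod → w₁ = w₂) := by
  intro hfree
  let eval := FreeMonoid.lift fun b : Bool => if b then x else y
  let w := malcevWords (FreeMonoid.of true ^ n) (FreeMonoid.of false ^ n) c
  have htrue : FreeMonoid.of true ∣ w.1 := (dvd_pow_self _ hn).trans (dvd_malcevWords_fst _ _ c)
  have hfalse : FreeMonoid.of false ∣ w.2 := (dvd_pow_self _ hn).trans (dvd_malcevWords_snd _ _ c)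
  have heval : eval w.1 = eval w.2 := by
    have hmap := map_malcevWords eval (FreeMonoid.of true ^ n) (FreeMonoid.of false ^ n) c
    simp only [eval, map_pow, FreeMonoid.lift_eval_of, if_true, Bool.false_eq_true, if_false]
      at hmap
    rwa [hmap] at h
  have hne : ∀ {v : FreeMonoid Bool} {b : Bool}, FreeMonoid.of b ∣ v → v.toList ≠ [] := by
    rintro v b ⟨u, rfl⟩
    simp [FreeMonoid.toList_mul]
  have hw : w.1 = w.2 := FreeMonoid.toList.injective <|
    hfree _ _ (hne htrue) (hne hfalse) (by simpa only [eval, FreeMonoid.lift_apply] using heval)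
  exact Bool.true_eq_false.mp (FreeMonoid.eq_of_of_dvd_of_of_dvd htrue (hw ▸ hfalse))

theorem no_free_subsemigroup_of_locally_nilpotent_by_periodic_general
    {G : Type u} [Group G] (P : Type v) [Group P] (π : G →* P)
    (hker : ∀ H : Subgroup G, H ≤ π.ker → Group.FG H → Group.IsNilpotent H)
    (hper : ∀ p : P, IsOfFinOrder p) :
    ∀ x y : G,
      ¬ (∀ w₁ w₂ : List Bool, w₁ ≠ [] → w₂ ≠ [] →
          (w₁.map fun b => if b then x else y).prod
            = (w₂.map fun b => if b then x else y).prod → w₁ = w₂) := by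
  intro x y
  obtain ⟨n, hn, hxn, hyn⟩ := π.exists_pow_mem_ker (hper (π x)) (hper (π y))
  let H := Subgroup.closure {x ^ n, y ^ n}
  have : Group.IsNilpotent H :=
    hker H (Subgroup.closure_le _ |>.2 (Set.insert_subset hxn (Set.singleton_subset_iff.2 hyn)))
      (Group.closure_finite_fg _)
  obtain ⟨c, hc⟩ := Subgroup.exists_malcevWords_fst_eq_snd (H := H)
    (Subgroup.subset_closure (Set.mem_insert _ _))
    (Subgroup.subset_closure (Set.mem_insert_of_mem _ rfl))
  exact not_injOn_nonempty_words_of_malcevWords_pow_eq x y hn hc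

/-- If `G` is an extension of a locally nilpotent group by a periodic group
(there is a surjection `π : G → P` onto a periodic group whose kernel is locally
nilpotent), then `G` contains no free subsemigroup of rank 2: for all `x, y ∈ G`,
the subsemigroup generated by `x` and `y` is not free on `x, y`. -/
theorem no_free_subsemigroup_of_locally_nilpotent_by_periodic
    {G : Type u} [Group G] (P : Type v) [Group P] (π : G →* P)
    (hsurj : Function.Surjective π)
    (hker : ∀ H : Subgroup G, H ≤ π.ker → Group.FG H → Group.IsNilpotent H)
    (hper : ∀ p : P, IsOfFinOrder p) :
    ∀ x y : G,
      ¬ (∀ w₁ w₂ : List Bool, w₁ ≠ [] → w₂ ≠ [] →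
          (w₁.map fun b => if b then x else y).prod
            = (w₂.map fun b => if b then x else y).prod → w₁ = w₂) :=
  no_free_subsemigroup_of_locally_nilpotent_by_periodic_general P π hker hper
end
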